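/- For n ≥ 1, setting s_n = (√(4n+1) - 5)/4, the function T_{n,2}^{s_n,s_n} is constant on [0,1] with value ((√(4n+1) - 1)/(4n))². -/

import Mathlib

open MeasureTheory intervalIntegral Filter

/-- The Beta operator with Jacobi weights: `B_n^{α,β}(f;x)`. -/
noncomputable def Bop (n α β : ℝ) (f : ℝ → ℝ) (x : ℝ) : ℝ :=
  (∫ t in (0:ℝ)..1, t ^ (n * x + α) * (1 - t) ^ (n - n * x + β) * f t) /
  (∫ t in (0:ℝ)..1, t ^ (n * x + α) * (1 - t) ^ (n - n * x + β))

/-- The `m`-th central moment `T_{n,m}^{α,β}(x)`. -/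
noncomputable def T (n α β : ℝ) (m : ℕ) (x : ℝ) : ℝ :=
  Bop n α β (fun t => (t - x) ^ m) x

/-- The Beta operator extended to the limiting cases `α = -1` (interpolation at `0`)
and `β = -1` (interpolation at `1`). -/
noncomputable def BopE (n α β : ℝ) (f : ℝ → ℝ) (x : ℝ) : ℝ :=
  if α = -1 ∧ x = 0 then f 0
  else if β = -1 ∧ x = 1 then f 1
  else Bop n α β f x

/-- The `m`-th central moment of the extended Beta operator. -/
noncomputable def TE (n α β : ℝ) (m : ℕ) (x : ℝ) : ℝ :=
  BopE n α β (fun t => (t - x) ^ m) x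

/-! For `p, q > -1` the weight `t ^ p * (1 - t) ^ q` has integral `B(p + 1, q + 1)` over `[0, 1]`,
and `B(a + 1, b) = a / (a + b) * B(a, b)`. Hence, with `p = n x + α` and `q = n - n x + β`, the
second central moment of `B_n^{α,β}` at `x` is the rational expression
`(p+1)(p+2)/((p+q+2)(p+q+3)) - 2x(p+1)/(p+q+2) + x²`, which for `α = β` is the closed form for
`T_{n,2}^{α,α}`. Writing `s = √(4n+1)` and `α = (s - 5)/4`, one has `2α(2α+5) = (s² - 25)/4 = n - 6`,
so the coefficient of `x(1-x)` vanishes; the constant term is `1/(s+1)² = ((s-1)/(4n))²` because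
`4n = (s-1)(s+1)`. -/

namespace ProbabilityTheory

lemma beta_add_one_left {a b : ℝ} (ha : 0 < a) (hb : 0 < b) :
    beta (a + 1) b = a / (a + b) * beta a b := by
  have hΓ : Real.Gamma (a + b) ≠ 0 := (Real.Gamma_pos_of_pos (by linarith)).ne'
  rw [beta, beta, Real.Gamma_add_one ha.ne', add_right_comm,
    Real.Gamma_add_one (by linarith)]
  field_simp

end ProbabilityTheory

open Complex in
lemma cpow_mul_one_sub_cpow_eqOn_ofReal (p q : ℝ) :
    Set.EqOn (fun t : ℝ => (t : ℂ) ^ ((p + 1 : ℂ) - 1) * (1 - (t : ℂ)) ^ ((q + 1 : ℂ) - 1))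
      (fun t : ℝ => ((t ^ p * (1 - t) ^ q : ℝ) : ℂ)) (Set.uIcc 0 1) := by
  intro t ht
  rw [Set.uIcc_of_le zero_le_one] at ht
  simp only [add_sub_cancel_right, ofReal_mul]
  rw [ofReal_cpow ht.1, ofReal_cpow (sub_nonneg.2 ht.2), ofReal_sub, ofReal_one]

lemma intervalIntegrable_rpow_mul_one_sub_rpow {p q : ℝ} (hp : -1 < p) (hq : -1 < q) :
    IntervalIntegrable (fun t : ℝ => t ^ p * (1 - t) ^ q) volume 0 1 := by
  have hconv := (Complex.betaIntegral_convergent (u := p + 1) (v := q + 1)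
    (by simp; linarith) (by simp; linarith)).congr
    fun t ht => cpow_mul_one_sub_cpow_eqOn_ofReal p q (Set.uIoc_subset_uIcc ht)
  exact ⟨by simpa [IntegrableOn] using hconv.1.re, by simp⟩

open ProbabilityTheory in
lemma integral_rpow_mul_one_sub_rpow {p q : ℝ} (hp : -1 < p) (hq : -1 < q) :
    ∫ t in (0:ℝ)..1, t ^ p * (1 - t) ^ q = beta (p + 1) (q + 1) := by
  rw [beta_eq_betaIntegralReal _ _ (by linarith) (by linarith), Complex.betaIntegral,
    Complex.ofReal_add, Complex.ofReal_add, Complex.ofReal_one,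
    intervalIntegral.integral_congr (cpow_mul_one_sub_cpow_eqOn_ofReal p q),
    intervalIntegral.integral_ofReal, Complex.ofReal_re]

open ProbabilityTheory in
lemma integral_rpow_mul_one_sub_rpow_mul_sub_sq {p q : ℝ} (hp : -1 < p) (hq : -1 < q) (x : ℝ) :
    ∫ t in (0:ℝ)..1, t ^ p * (1 - t) ^ q * (t - x) ^ 2 =
      beta (p + 3) (q + 1) - 2 * x * beta (p + 2) (q + 1) + x ^ 2 * beta (p + 1) (q + 1) := by
  have hexpand : Set.EqOn (fun t : ℝ => t ^ p * (1 - t) ^ q * (t - x) ^ 2)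
      (fun t => t ^ (p + 2) * (1 - t) ^ q - 2 * x * (t ^ (p + 1) * (1 - t) ^ q)
        + x ^ 2 * (t ^ p * (1 - t) ^ q)) (Set.uIcc 0 1) := by
    intro t ht
    have ht0 : 0 ≤ t := by rw [Set.uIcc_of_le zero_le_one] at ht; exact ht.1
    simp only
    rw [show p + 2 = p + 1 + 1 by ring, Real.rpow_add_one' ht0 (by linarith),
      Real.rpow_add_one' ht0 (by linarith)]
    ring
  have hp1 : -1 < p + 1 := by linarith
  have hp2 : -1 < p + 2 := by linarith
  have hint {r : ℝ} (hr : -1 < r) := intervalIntegrable_rpow_mul_one_sub_rpow hr hq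
  rw [intervalIntegral.integral_congr hexpand,
    intervalIntegral.integral_add ((hint hp2).sub ((hint hp1).const_mul _))
      ((hint hp).const_mul _),
    intervalIntegral.integral_sub (hint hp2) ((hint hp1).const_mul _),
    intervalIntegral.integral_const_mul, intervalIntegral.integral_const_mul,
    integral_rpow_mul_one_sub_rpow hp hq, integral_rpow_mul_one_sub_rpow hp1 hq,
    integral_rpow_mul_one_sub_rpow hp2 hq]
  norm_num [add_assoc]

open ProbabilityTheory in
lemma integral_rpow_mul_one_sub_rpow_mul_sub_sq_div {p q : ℝ} (hp : -1 < p) (hq : -1 < q)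
    (x : ℝ) :
    (∫ t in (0:ℝ)..1, t ^ p * (1 - t) ^ q * (t - x) ^ 2) / ∫ t in (0:ℝ)..1, t ^ p * (1 - t) ^ q =
      (p + 1) * (p + 2) / ((p + q + 2) * (p + q + 3)) - 2 * x * (p + 1) / (p + q + 2) + x ^ 2 := by
  have hp1 : 0 < p + 1 := by linarith
  have hq1 : 0 < q + 1 := by linarith
  have hbeta2 : beta (p + 2) (q + 1) = (p + 1) / (p + q + 2) * beta (p + 1) (q + 1) := by
    rw [show p + 2 = p + 1 + 1 by ring, beta_add_one_left hp1 hq1]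
    ring_nf
  have hbeta3 : beta (p + 3) (q + 1) = (p + 2) / (p + q + 3) * beta (p + 2) (q + 1) := by
    rw [show p + 3 = p + 2 + 1 by ring, beta_add_one_left (by linarith) hq1]
    ring_nf
  have hB : beta (p + 1) (q + 1) ≠ 0 := (beta_pos hp1 hq1).ne'
  have h2 : p + q + 2 ≠ 0 := by linarith
  have h3 : p + q + 3 ≠ 0 := by linarith
  rw [integral_rpow_mul_one_sub_rpow_mul_sub_sq hp hq, integral_rpow_mul_one_sub_rpow hp hq,
    hbeta3, hbeta2]
  field_simp

lemma T_two_self {n α x : ℝ} (hn : 0 ≤ n) (hα : -1 < α) (hx : x ∈ Set.Icc (0:ℝ) 1) :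
    T n α α 2 x = ((α + 1) * (α + 2) - (-n + 6 + 2 * α * (2 * α + 5)) * x * (1 - x)) /
      ((n + 2 * α + 2) * (n + 2 * α + 3)) := by
  have hnx : 0 ≤ n * x := mul_nonneg hn hx.1
  have hnx' : n * x ≤ n := mul_le_of_le_one_right hn hx.2
  have h2 : n + α * 2 + 2 ≠ 0 := by linarith
  have h3 : n + α * 2 + 3 ≠ 0 := by linarith
  have hsum (c : ℝ) : n * x + α + (n - n * x + α) + c = n + 2 * α + c := by ring
  rw [T, Bop, integral_rpow_mul_one_sub_rpow_mul_sub_sq_div (by linarith) (by linarith),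
    hsum, hsum]
  field_simp
  ring

theorem constant_second_moment (n : ℕ) (hn : 1 ≤ n) :
    ∀ x ∈ Set.Icc (0:ℝ) 1,
      T n ((Real.sqrt (4 * n + 1) - 5) / 4) ((Real.sqrt (4 * n + 1) - 5) / 4) 2 x =
        ((Real.sqrt (4 * n + 1) - 1) / (4 * n)) ^ 2 := by
  intro x hx
  set s := Real.sqrt (4 * n + 1)
  have hs_sq : s ^ 2 = 4 * n + 1 := Real.sq_sqrt (by positivity)
  have hs : 1 < s := Real.lt_sqrt zero_le_one |>.2 (by norm_num; exact_mod_cast hn)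
  rw [T_two_self (Nat.cast_nonneg n) (by linarith) hx]
  have hcoeff : -(n : ℝ) + 6 + 2 * ((s - 5) / 4) * (2 * ((s - 5) / 4) + 5) = 0 := by
    linear_combination hs_sq / 4
  have hden2 : (n : ℝ) + 2 * ((s - 5) / 4) + 2 = (s - 1) * (s + 3) / 4 := by
    linear_combination -hs_sq / 4
  have hden3 : (n : ℝ) + 2 * ((s - 5) / 4) + 3 = (s + 1) ^ 2 / 4 := by
    linear_combination -hs_sq / 4
  have h4n : 4 * (n : ℝ) = (s - 1) * (s + 1) := by linear_combination -hs_sq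
  have h1 : s - 1 ≠ 0 := by linarith
  have h2 : s + 1 ≠ 0 := by linarith
  have h3 : s + 3 ≠ 0 := by linarith
  rw [hcoeff, zero_mul, zero_mul, sub_zero, hden2, hden3, h4n]
  field_simp
  ring
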